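/- Let T ∈ 𝒩 and ε > 0. Then there exist a bounded random compact operator R, a measurable map h : Ω → H with ‖h(ω)‖ = 1 for ℙ-a.e. ω, and a measurable function γ : Ω → ℝ with |γ(ω)| ≥ ε/3 for ℙ-a.e. ω, such that ‖R − T‖_∞ ≤ ε and R(ω) h(ω) = γ(ω) · h(θω) for ℙ-a.e. ω. -/

import Mathlib

open MeasureTheory Filter Topology TopologicalSpace
open scoped RealInnerProductSpace ENNReal

noncomputable section

variable {Ω H : Type*}

/-- The cocycle generated by a random operator: `T^0_ω = id`,
`T^{n+1}_ω = T^n_{θω} ∘ T(ω)`. -/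
def cocycle [NormedAddCommGroup H] [NormedSpace ℝ H] (θ : Ω → Ω) (T : Ω → H →L[ℝ] H) :
    ℕ → Ω → H →L[ℝ] H
  | 0, _ => ContinuousLinearMap.id ℝ H
  | n + 1, ω => (cocycle θ T n (θ ω)).comp (T ω)

/-- A bounded random compact operator: strongly measurable, pointwise compact, and with
finite essential supremum of the operator norms. -/
structure IsBddRandomCompactOp [NormedAddCommGroup H] [NormedSpace ℝ H] [MeasurableSpace H]
    [MeasurableSpace Ω] (μ : Measure Ω) (T : Ω → H →L[ℝ] H) : Prop where
  meas : ∀ x : H, Measurable fun ω => T ω x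
  compact : ∀ ω, IsCompactOperator (T ω)
  bdd : essSup (fun ω => (‖T ω‖₊ : ℝ≥0∞)) μ < ⊤

/-- Membership in `𝒩`: for a.e. `ω`, `(1/n) log ‖T^n_ω‖ → -∞` (with `log 0 = -∞`),
equivalently for every `c : ℝ` eventually `‖T^n_ω‖ ≤ exp (c n)`. -/
def MemNullClass [NormedAddCommGroup H] [NormedSpace ℝ H] [MeasurableSpace Ω] (μ : Measure Ω)
    (θ : Ω → Ω) (T : Ω → H →L[ℝ] H) : Prop :=
  ∀ᵐ ω ∂μ, ∀ c : ℝ, ∀ᶠ n : ℕ in atTop, ‖cocycle θ T n ω‖ ≤ Real.exp (c * n)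

/-!
In infinite dimensions a compact operator maps an orthonormal sequence `e n` to a null
sequence, so for every `ω` some `e n` (the first one, which makes the choice measurable) has
`‖T ω (e n)‖ ≤ 2ε/3`; call it `h ω`. The rank-one correction
`x ↦ ⟪h ω, x⟫ • ((ε/3) • h (θ ω) - T ω (h ω))` then has norm at most `ε` and turns `h` into
an invariant direction with growth factor `ε/3`.
-/

open InnerProductSpace

section Hilbert

variable {𝕜 E F : Type*} [RCLike 𝕜] [NormedAddCommGroup E] [InnerProductSpace 𝕜 E]
  [NormedAddCommGroup F] [InnerProductSpace 𝕜 F]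

theorem exists_orthonormal_nat_of_not_finiteDimensional [CompleteSpace E]
    (hinf : ¬ FiniteDimensional 𝕜 E) : ∃ e : ℕ → E, Orthonormal 𝕜 e := by
  obtain ⟨w, b, hb⟩ := exists_hilbertBasis 𝕜 E
  have hw : w.Infinite := fun hfin => hinf <| by
    have := hfin.fintype
    exact Module.Finite.of_basis b.toOrthonormalBasis.toBasis
  exact ⟨Subtype.val ∘ hw.natEmbedding, (hb ▸ b.orthonormal).comp _ hw.natEmbedding.injective⟩

theorem Orthonormal.tendsto_inner_atTop_zero {e : ℕ → E} (he : Orthonormal 𝕜 e) (x : E) :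
    Tendsto (fun n => ⟪e n, x⟫_𝕜) atTop (𝓝 0) := by
  have hsq := (he.inner_products_summable x).tendsto_atTop_zero
  rw [tendsto_zero_iff_norm_tendsto_zero]
  simpa [Function.comp_def, Real.sqrt_sq (norm_nonneg _)] using
    (Real.continuous_sqrt.tendsto 0).comp hsq

theorem IsCompactOperator.tendsto_apply_orthonormal [CompleteSpace E] [CompleteSpace F]
    {S : E →L[𝕜] F} (hS : IsCompactOperator S) {e : ℕ → E} (he : Orthonormal 𝕜 e) :
    Tendsto (fun n => S (e n)) atTop (𝓝 0) := by
  obtain ⟨K, hK, hSK⟩ := hS.image_closedBall_subset_compact 1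
  refine tendsto_of_subseq_tendsto fun ns hns => ?_
  obtain ⟨y, -, φ, hφ, hy⟩ :=
    hK.tendsto_subseq fun n => hSK ⟨e (ns n), by simp [he.1], rfl⟩
  have hweak : Tendsto (fun n => ⟪S (e (ns (φ n))), y⟫_𝕜) atTop (𝓝 0) := by
    simpa only [ContinuousLinearMap.adjoint_inner_right, Function.comp_def] using
      (he.tendsto_inner_atTop_zero (ContinuousLinearMap.adjoint S y)).comp
        (hns.comp hφ.tendsto_atTop)
  have hy0 : y = 0 :=
    inner_self_eq_zero.mp (tendsto_nhds_unique (hy.inner tendsto_const_nhds) hweak)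
  exact ⟨φ, hy0 ▸ hy⟩

theorem isCompactOperator_rankOne (x : E) (y : F) : IsCompactOperator (rankOne 𝕜 x y) :=
  (isCompactOperator_of_locallyCompactSpace_dom (innerSL 𝕜 y)).clm_comp (.toSpanSingleton 𝕜 x)

theorem add_rankOne_sub_apply_self (S : E →L[𝕜] E) {u : E} (hu : ‖u‖ = 1) (w : E) :
    (S + rankOne 𝕜 (w - S u) u) u = w := by
  simp [inner_self_eq_norm_sq_to_K, hu]

end Hilbert

section RandomOperator

variable [MeasurableSpace Ω] {μ : Measure Ω} [MeasurableSpace H]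

theorem IsBddRandomCompactOp.of_ae_norm_le [NormedAddCommGroup H] [NormedSpace ℝ H]
    {T : Ω → H →L[ℝ] H} (hmeas : ∀ x, Measurable fun ω => T ω x)
    (hcomp : ∀ ω, IsCompactOperator (T ω)) {C : ℝ} (hC : ∀ᵐ ω ∂μ, ‖T ω‖ ≤ C) :
    IsBddRandomCompactOp μ T where
  meas := hmeas
  compact := hcomp
  bdd := (essSup_le_of_ae_le _ (hC.mono fun ω hω => by
    rw [← enorm_eq_nnnorm, ← ofReal_norm]; exact ENNReal.ofReal_le_ofReal hω)).trans_lt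
    ENNReal.ofReal_lt_top

theorem IsBddRandomCompactOp.add [NormedAddCommGroup H] [NormedSpace ℝ H] [MeasurableAdd₂ H]
    {T P : Ω → H →L[ℝ] H} (hT : IsBddRandomCompactOp μ T) (hP : IsBddRandomCompactOp μ P) :
    IsBddRandomCompactOp μ fun ω => T ω + P ω where
  meas x := (hT.meas x).add (hP.meas x)
  compact ω := (hT.compact ω).add (hP.compact ω)
  bdd := calc
    essSup (fun ω => (‖T ω + P ω‖₊ : ℝ≥0∞)) μ
        ≤ essSup (fun ω => (‖T ω‖₊ : ℝ≥0∞) + (‖P ω‖₊ : ℝ≥0∞)) μ :=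
      essSup_mono_ae (ae_of_all _ fun ω => ENNReal.coe_le_coe.2 (nnnorm_add_le (T ω) (P ω)))
    _ ≤ essSup (fun ω => (‖T ω‖₊ : ℝ≥0∞)) μ + essSup (fun ω => (‖P ω‖₊ : ℝ≥0∞)) μ :=
      ENNReal.essSup_add_le _ _
    _ < ⊤ := ENNReal.add_lt_top.2 ⟨hT.bdd, hP.bdd⟩

variable [NormedAddCommGroup H] [InnerProductSpace ℝ H]

theorem isBddRandomCompactOp_rankOne [SecondCountableTopology H] [BorelSpace H]
    {v h : Ω → H} (hv : Measurable v) (hh : Measurable h) {C : ℝ}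
    (hC : ∀ᵐ ω ∂μ, ‖v ω‖ * ‖h ω‖ ≤ C) :
    IsBddRandomCompactOp μ fun ω => rankOne ℝ (v ω) (h ω) :=
  .of_ae_norm_le (fun x => (hh.inner measurable_const).smul hv)
    (fun ω => isCompactOperator_rankOne _ _) (by simpa using hC)

theorem exists_measurable_unit_vector_norm_apply_le [CompleteSpace H] [BorelSpace H]
    (hinf : ¬ FiniteDimensional ℝ H) {T : Ω → H →L[ℝ] H}
    (hmeas : ∀ x, Measurable fun ω => T ω x) (hcomp : ∀ ω, IsCompactOperator (T ω))
    {δ : ℝ} (hδ : 0 < δ) :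
    ∃ h : Ω → H, Measurable h ∧ Measurable (fun ω => T ω (h ω)) ∧
      (∀ ω, ‖h ω‖ = 1) ∧ ∀ ω, ‖T ω (h ω)‖ ≤ δ := by
  obtain ⟨e, he⟩ := exists_orthonormal_nat_of_not_finiteDimensional hinf
  have hsmall : ∀ ω, ∃ n, ‖T ω (e n)‖ ≤ δ := fun ω =>
    (((hcomp ω).tendsto_apply_orthonormal he).norm.eventually
      (ge_mem_nhds (by simpa using hδ))).exists
  have hp : ∀ n, MeasurableSet {ω | ‖T ω (e n)‖ ≤ δ} := fun n =>
    measurableSet_le (hmeas (e n)).norm measurable_const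
  exact ⟨fun ω => e (Nat.find (hsmall ω)), .find (fun _ => measurable_const) hp hsmall,
    .find (fun n => hmeas (e n)) hp hsmall, fun ω => he.1 _, fun ω => Nat.find_spec (hsmall ω)⟩

end RandomOperator

theorem null_class_invariant_direction_general
    [NormedAddCommGroup H] [InnerProductSpace ℝ H] [CompleteSpace H] [SeparableSpace H]
    [MeasurableSpace H] [BorelSpace H] (hinf : ¬ FiniteDimensional ℝ H)
    [MeasurableSpace Ω] (μ : Measure Ω) (θ : Ω ≃ᵐ Ω)
    (T : Ω → H →L[ℝ] H) (hT : IsBddRandomCompactOp μ T) (ε : ℝ) (hε : 0 < ε) :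
    ∃ (R : Ω → H →L[ℝ] H) (h : Ω → H) (γ : Ω → ℝ),
      IsBddRandomCompactOp μ R ∧ Measurable h ∧ Measurable γ ∧
      (∀ᵐ ω ∂μ, ‖h ω‖ = 1) ∧ (∀ᵐ ω ∂μ, ε / 3 ≤ |γ ω|) ∧
      (∀ᵐ ω ∂μ, ‖R ω - T ω‖ ≤ ε) ∧
      (∀ᵐ ω ∂μ, R ω (h ω) = γ ω • h (θ ω)) := by
  have : SecondCountableTopology H := UniformSpace.secondCountable_of_separable H
  obtain ⟨h, hh, hTh, h_unit, h_small⟩ := exists_measurable_unit_vector_norm_apply_le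
    hinf hT.meas hT.compact (by positivity : 0 < 2 * ε / 3)
  set v : Ω → H := fun ω => (ε / 3) • h (θ ω) - T ω (h ω)
  have hv_meas : Measurable v := ((hh.comp θ.measurable).const_smul _).sub hTh
  have hv : ∀ ω, ‖v ω‖ ≤ ε := fun ω => calc
    ‖v ω‖ ≤ ‖(ε / 3) • h (θ ω)‖ + ‖T ω (h ω)‖ := norm_sub_le _ _
    _ ≤ ε / 3 + 2 * ε / 3 := by
      rw [norm_smul, h_unit, Real.norm_of_nonneg (by positivity), mul_one]
      linarith [h_small ω]
    _ = ε := by ring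
  refine ⟨fun ω => T ω + rankOne ℝ (v ω) (h ω), h, fun _ => ε / 3,
    hT.add (isBddRandomCompactOp_rankOne (C := ε) hv_meas hh (ae_of_all _ fun ω => ?_)), hh,
    measurable_const, ae_of_all _ h_unit, ae_of_all _ fun _ => le_abs_self _,
    ae_of_all _ fun ω => ?_, ae_of_all _ fun ω => add_rankOne_sub_apply_self _ (h_unit ω) _⟩
  all_goals simpa [h_unit] using hv ω

/-- Proposition 3.7(ii): any random compact operator in `𝒩` can be `ε`-perturbed to one
possessing an invariant unit random vector with growth rate bounded below by `ε/3`. -/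
theorem null_class_invariant_direction
    [NormedAddCommGroup H] [InnerProductSpace ℝ H] [CompleteSpace H] [SeparableSpace H]
    [MeasurableSpace H] [BorelSpace H] (hinf : ¬ FiniteDimensional ℝ H)
    [MeasurableSpace Ω] [StandardBorelSpace Ω] (μ : Measure Ω) [IsProbabilityMeasure μ]
    [NullSingletonClass μ] (θ : Ω ≃ᵐ Ω) (hθ : Ergodic (⇑θ) μ)
    (T : Ω → H →L[ℝ] H) (hT : IsBddRandomCompactOp μ T)
    (hTN : MemNullClass μ (⇑θ) T) (ε : ℝ) (hε : 0 < ε) :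
    ∃ (R : Ω → H →L[ℝ] H) (h : Ω → H) (γ : Ω → ℝ),
      IsBddRandomCompactOp μ R ∧ Measurable h ∧ Measurable γ ∧
      (∀ᵐ ω ∂μ, ‖h ω‖ = 1) ∧ (∀ᵐ ω ∂μ, ε / 3 ≤ |γ ω|) ∧
      (∀ᵐ ω ∂μ, ‖R ω - T ω‖ ≤ ε) ∧
      (∀ᵐ ω ∂μ, R ω (h ω) = γ ω • h (θ ω)) :=
  null_class_invariant_direction_general hinf μ θ T hT ε hε
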